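/- For every real number x with 0 ≤ x ≤ 1, the chain of inequalities 3x/(2 + √(1 − x²)) ≤ 6(√(1 + x) − √(1 − x))/(4 + √(1 + x) + √(1 − x)) ≤ arcsin x ≤ φ(x) ≤ π(√2 + 1/2)·(√(1 + x) − √(1 − x))/(4 + √(1 + x) + √(1 − x)) ≤ πx/(2 + √(1 − x²)) holds, where φ(x) = (π(2 − √2)/(π − 2√2))·(√(1 + x) − √(1 − x)) / (√2(4 − π)/(π − 2√2) + √(1 + x) + √(1 − x)). -/

import Mathlib

/-!
Put `x = sin 2s` with `s ∈ [0, π/4]`. Then `√(1 ± x) = cos s ± sin s`, `√(1 - x²) = cos 2s` and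
`arcsin x = 2s`, and the common ratio `(√(1+x) - √(1-x)) / (4 + √(1+x) + √(1-x))` is
`sin s / (2 + cos s)`. The second inequality is the Cusa–Huygens inequality
`3 sin s ≤ s (2 + cos s)`; the first, fourth and fifth reduce to polynomial inequalities in
`cos s ∈ [√2/2, 1]`. The third is `s (B + C cos s) ≤ A sin s` for the constants of `φ`; it is an
equality at `s = 0` and `s = π/4`, and the fourth derivative of the difference is nonpositive,
so each lower derivative, and finally the difference itself, is first nonnegative and then
nonpositive on `[0, π/4]`.
-/

/-- The upper bound `φ` for `arcsin` obtained by the λ-method of Mitrinović–Vasić. -/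
noncomputable def phiBound (x : ℝ) : ℝ :=
  (Real.pi * (2 - Real.sqrt 2) / (Real.pi - 2 * Real.sqrt 2)) *
      (Real.sqrt (1 + x) - Real.sqrt (1 - x)) /
    (Real.sqrt 2 * (4 - Real.pi) / (Real.pi - 2 * Real.sqrt 2) +
      Real.sqrt (1 + x) + Real.sqrt (1 - x))

open Real Set

section SignPattern

variable {f f' : ℝ → ℝ} {a b : ℝ}

def NonnegThenNonpos (f : ℝ → ℝ) (a b : ℝ) : Prop :=
  ∃ c ∈ Icc a b, (∀ x ∈ Ico a c, 0 ≤ f x) ∧ ∀ x ∈ Ioc c b, f x ≤ 0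

lemma monotoneOn_Icc_of_hasDerivAt (hf : ∀ x, HasDerivAt f (f' x) x)
    (h : ∀ x ∈ Ioo a b, 0 ≤ f' x) : MonotoneOn f (Icc a b) :=
  monotoneOn_of_hasDerivWithinAt_nonneg (convex_Icc a b)
    (fun x _ ↦ (hf x).continuousAt.continuousWithinAt) (fun x _ ↦ (hf x).hasDerivWithinAt)
    (by rwa [interior_Icc])

lemma antitoneOn_Icc_of_hasDerivAt (hf : ∀ x, HasDerivAt f (f' x) x)
    (h : ∀ x ∈ Ioo a b, f' x ≤ 0) : AntitoneOn f (Icc a b) :=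
  antitoneOn_of_hasDerivWithinAt_nonpos (convex_Icc a b)
    (fun x _ ↦ (hf x).continuousAt.continuousWithinAt) (fun x _ ↦ (hf x).hasDerivWithinAt)
    (by rwa [interior_Icc])

lemma nonneg_of_hasDerivAt_nonneg (hf : ∀ x, HasDerivAt f (f' x) x)
    (h : ∀ x ∈ Ioo a b, 0 ≤ f' x) (ha : 0 ≤ f a) : ∀ x ∈ Icc a b, 0 ≤ f x := fun _ hx ↦
  ha.trans (monotoneOn_Icc_of_hasDerivAt hf h ⟨le_rfl, hx.1.trans hx.2⟩ hx hx.1)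

lemma AntitoneOn.nonnegThenNonpos (hab : a ≤ b) (hf : AntitoneOn f (Icc a b)) (ha : 0 ≤ f a) :
    NonnegThenNonpos f a b := by
  set S := {x ∈ Icc a b | 0 ≤ f x}
  have haS : a ∈ S := ⟨⟨le_rfl, hab⟩, ha⟩
  have hbdd : BddAbove S := ⟨b, fun y hy ↦ hy.1.2⟩
  have hc : sSup S ∈ Icc a b := ⟨le_csSup hbdd haS, csSup_le ⟨a, haS⟩ fun y hy ↦ hy.1.2⟩
  refine ⟨sSup S, hc, fun x hx ↦ ?_, fun x hx ↦ ?_⟩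
  · obtain ⟨y, ⟨hy, hfy⟩, hxy⟩ := exists_lt_of_lt_csSup ⟨a, haS⟩ hx.2
    exact hfy.trans (hf ⟨hx.1, hxy.le.trans hy.2⟩ hy hxy.le)
  · by_contra! hfx
    exact hx.1.not_ge (le_csSup hbdd ⟨⟨hc.1.trans hx.1.le, hx.2⟩, hfx.le⟩)

lemma monotoneOn_antitoneOn_of_hasDerivAt (hf : ∀ x, HasDerivAt f (f' x) x)
    {c : ℝ} (h₁ : ∀ x ∈ Ico a c, 0 ≤ f' x) (h₂ : ∀ x ∈ Ioc c b, f' x ≤ 0) :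
    MonotoneOn f (Icc a c) ∧ AntitoneOn f (Icc c b) :=
  ⟨monotoneOn_Icc_of_hasDerivAt hf fun x hx ↦ h₁ x ⟨hx.1.le, hx.2⟩,
    antitoneOn_Icc_of_hasDerivAt hf fun x hx ↦ h₂ x ⟨hx.1, hx.2.le⟩⟩

lemma NonnegThenNonpos.of_hasDerivAt (hf : ∀ x, HasDerivAt f (f' x) x)
    (h : NonnegThenNonpos f' a b) (ha : 0 ≤ f a) : NonnegThenNonpos f a b := by
  obtain ⟨c, hc, h₁, h₂⟩ := h
  obtain ⟨hmono, hanti⟩ := monotoneOn_antitoneOn_of_hasDerivAt hf h₁ h₂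
  have hfc : 0 ≤ f c := ha.trans (hmono ⟨le_rfl, hc.1⟩ ⟨hc.1, le_rfl⟩ hc.1)
  obtain ⟨d, hd, hpos, hneg⟩ := hanti.nonnegThenNonpos hc.2 hfc
  refine ⟨d, ⟨hc.1.trans hd.1, hd.2⟩, fun x hx ↦ ?_, hneg⟩
  rcases le_or_gt x c with hxc | hcx
  · exact ha.trans (hmono ⟨le_rfl, hc.1⟩ ⟨hx.1, hxc⟩ hx.1)
  · exact hpos x ⟨hcx.le, hx.2⟩

lemma NonnegThenNonpos.nonneg_of_hasDerivAt (hf : ∀ x, HasDerivAt f (f' x) x)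
    (h : NonnegThenNonpos f' a b) (ha : 0 ≤ f a) (hb : 0 ≤ f b) : ∀ x ∈ Icc a b, 0 ≤ f x := by
  obtain ⟨c, hc, h₁, h₂⟩ := h
  obtain ⟨hmono, hanti⟩ := monotoneOn_antitoneOn_of_hasDerivAt hf h₁ h₂
  intro x hx
  rcases le_total x c with hxc | hcx
  · exact ha.trans (hmono ⟨le_rfl, hc.1⟩ ⟨hx.1, hxc⟩ hx.1)
  · exact hb.trans (hanti ⟨hcx, hx.2⟩ ⟨hc.2, le_rfl⟩ hx.2)

end SignPattern

lemma three_mul_sin_le_mul_two_add_cos {s : ℝ} (hs : 0 ≤ s) : 3 * sin s ≤ s * (2 + cos s) := by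
  rcases le_or_gt s π with hsπ | hπs
  · have h₂ : ∀ x ∈ Icc 0 π, 0 ≤ sin x - x * cos x := by
      refine nonneg_of_hasDerivAt_nonneg (f' := fun x ↦ x * sin x) (fun x ↦ ?_)
        (fun x hx ↦ mul_nonneg hx.1.le (sin_nonneg_of_nonneg_of_le_pi hx.1.le hx.2.le)) (by simp)
      exact ((hasDerivAt_sin x).sub ((hasDerivAt_id' x).mul (hasDerivAt_cos x))).congr_deriv
        (by ring)
    have h₁ : ∀ x ∈ Icc 0 π, 0 ≤ 2 - 2 * cos x - x * sin x := by
      refine nonneg_of_hasDerivAt_nonneg (fun x ↦ ?_) (fun x hx ↦ h₂ x (Ioo_subset_Icc_self hx))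
        (by simp)
      exact (((hasDerivAt_cos x).const_mul 2).const_sub 2 |>.sub
        ((hasDerivAt_id' x).mul (hasDerivAt_sin x))).congr_deriv (by ring)
    have h₀ : ∀ x ∈ Icc 0 π, 0 ≤ x * (2 + cos x) - 3 * sin x := by
      refine nonneg_of_hasDerivAt_nonneg (fun x ↦ ?_) (fun x hx ↦ h₁ x (Ioo_subset_Icc_self hx))
        (by simp)
      exact (((hasDerivAt_id' x).mul ((hasDerivAt_cos x).const_add 2)).sub
        ((hasDerivAt_sin x).const_mul 3)).congr_deriv (by ring)
    linarith [h₀ s ⟨hs, hsπ⟩]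
  · nlinarith [sin_le_one s, neg_one_le_cos s, pi_gt_three]

lemma mul_add_mul_cos_le_mul_sin {A B C b : ℝ} (hb : b ≤ π / 2) (hC : 0 ≤ C)
    (hCA : A ≤ 3 * C) (hBA : B + C ≤ A) (hend : b * (B + C * cos b) ≤ A * sin b) {s : ℝ}
    (hs : s ∈ Icc 0 b) : s * (B + C * cos s) ≤ A * sin s := by
  have hd₀ : ∀ x, HasDerivAt (fun x ↦ A * sin x - x * (B + C * cos x))
      ((A - C) * cos x - B + C * x * sin x) x := fun x ↦
    (((hasDerivAt_sin x).const_mul A).sub ((hasDerivAt_id' x).mul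
      (((hasDerivAt_cos x).const_mul C).const_add B))).congr_deriv (by ring)
  have hd₁ : ∀ x, HasDerivAt (fun x ↦ (A - C) * cos x - B + C * x * sin x)
      ((2 * C - A) * sin x + C * x * cos x) x := fun x ↦
    ((((hasDerivAt_cos x).const_mul (A - C)).sub_const B).add
      (((hasDerivAt_id' x).const_mul C).mul (hasDerivAt_sin x))).congr_deriv (by ring)
  have hd₂ : ∀ x, HasDerivAt (fun x ↦ (2 * C - A) * sin x + C * x * cos x)
      ((3 * C - A) * cos x - C * x * sin x) x := fun x ↦
    (((hasDerivAt_sin x).const_mul (2 * C - A)).add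
      (((hasDerivAt_id' x).const_mul C).mul (hasDerivAt_cos x))).congr_deriv (by ring)
  have hd₃ : ∀ x, HasDerivAt (fun x ↦ (3 * C - A) * cos x - C * x * sin x)
      (-((4 * C - A) * sin x) - C * x * cos x) x := fun x ↦
    (((hasDerivAt_cos x).const_mul (3 * C - A)).sub
      (((hasDerivAt_id' x).const_mul C).mul (hasDerivAt_sin x))).congr_deriv (by ring)
  have h₃ : NonnegThenNonpos (fun x ↦ (3 * C - A) * cos x - C * x * sin x) 0 b := by
    refine (antitoneOn_Icc_of_hasDerivAt hd₃ fun x hx ↦ ?_).nonnegThenNonpos (hs.1.trans hs.2)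
      (by simpa using hCA)
    have hsin := sin_nonneg_of_nonneg_of_le_pi hx.1.le (by linarith [hx.2, pi_pos])
    have hcos : 0 ≤ cos x :=
      cos_nonneg_of_mem_Icc ⟨by linarith [hx.1, pi_pos], by linarith [hx.2]⟩
    nlinarith [mul_nonneg (mul_nonneg hC hx.1.le) hcos,
      mul_nonneg (by linarith : 0 ≤ 4 * C - A) hsin]
  have h₁ := (h₃.of_hasDerivAt hd₂ (by simp)).of_hasDerivAt hd₁ (by simp; linarith)
  have h₀ := h₁.nonneg_of_hasDerivAt hd₀ (by simp) (by simpa using hend)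
  simpa using h₀ s hs

lemma sqrt_two_gt_d7 : (1.4142135 : ℝ) < √2 := by
  nlinarith [sq_sqrt (zero_le_two : (0 : ℝ) ≤ 2), sqrt_nonneg 2]

lemma sqrt_two_lt_d7 : √2 < 1.4142136 := by
  nlinarith [sq_sqrt (zero_le_two : (0 : ℝ) ≤ 2), sqrt_nonneg 2]

lemma two_mul_sqrt_two_lt_pi : 2 * √2 < π := by
  linarith [sqrt_two_lt_d7, pi_gt_d6]

lemma sqrt_one_add_sin_two_mul {s : ℝ} (h : 0 ≤ cos s + sin s) :
    √(1 + sin (2 * s)) = cos s + sin s := by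
  rw [← sqrt_sq h, sin_two_mul]
  congr 1
  linear_combination -(sin_sq_add_cos_sq s)

lemma sqrt_one_sub_sin_two_mul {s : ℝ} (h : sin s ≤ cos s) :
    √(1 - sin (2 * s)) = cos s - sin s := by
  rw [← sqrt_sq (sub_nonneg.2 h), sin_two_mul]
  congr 1
  linear_combination -(sin_sq_add_cos_sq s)

lemma three_mul_sin_two_mul_div_le {s : ℝ} (h : 0 ≤ sin s) :
    3 * sin (2 * s) / (2 + cos (2 * s)) ≤ 6 * sin s / (2 + cos s) := by
  rw [sin_two_mul, cos_two_mul, div_le_div_iff₀ (by nlinarith [sq_nonneg (cos s)])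
    (by linarith [neg_one_le_cos s])]
  nlinarith [mul_nonneg h (sq_nonneg (cos s - 1))]

section QuarterPi

variable {s : ℝ} (hs : s ∈ Icc 0 (π / 4))
include hs

lemma sin_nonneg_of_mem_Icc_pi_div_four : 0 ≤ sin s :=
  sin_nonneg_of_nonneg_of_le_pi hs.1 (by linarith [hs.2, pi_pos])

lemma sqrt_two_div_two_le_cos : √2 / 2 ≤ cos s := by
  rw [← cos_pi_div_four]
  exact cos_le_cos_of_nonneg_of_le_pi hs.1 (by linarith [pi_pos]) hs.2

lemma sin_le_cos_of_mem_Icc_pi_div_four : sin s ≤ cos s := by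
  have := sqrt_two_div_two_le_cos hs
  nlinarith [sin_sq_add_cos_sq s, sin_nonneg_of_mem_Icc_pi_div_four hs,
    sq_sqrt (zero_le_two : (0 : ℝ) ≤ 2), sqrt_nonneg 2]

lemma mul_sqrt_sub_sqrt_div_eq (k : ℝ) :
    k * (√(1 + sin (2 * s)) - √(1 - sin (2 * s))) /
        (4 + √(1 + sin (2 * s)) + √(1 - sin (2 * s))) = k * sin s / (2 + cos s) := by
  have hσ := sin_nonneg_of_mem_Icc_pi_div_four hs
  have hσc := sin_le_cos_of_mem_Icc_pi_div_four hs
  rw [sqrt_one_add_sin_two_mul (by linarith), sqrt_one_sub_sin_two_mul hσc,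
    div_eq_div_iff (by linarith) (by linarith)]
  ring

lemma phiBound_sin_two_mul : phiBound (sin (2 * s)) =
    2 * π * (2 - √2) * sin s / (√2 * (4 - π) + 2 * (π - 2 * √2) * cos s) := by
  have hσc := sin_le_cos_of_mem_Icc_pi_div_four hs
  have hK : π - 2 * √2 ≠ 0 := (sub_pos.2 two_mul_sqrt_two_lt_pi).ne'
  rw [phiBound, sqrt_one_add_sin_two_mul (by linarith [sin_nonneg_of_mem_Icc_pi_div_four hs]),
    sqrt_one_sub_sin_two_mul hσc]
  field_simp
  ring

lemma phiBound_denom_pos : 0 < √2 * (4 - π) + 2 * (π - 2 * √2) * cos s := by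
  have := sqrt_two_div_two_le_cos hs
  have := two_mul_sqrt_two_lt_pi
  have : 0 < √2 * (4 - π) := mul_pos (by positivity) (by linarith [pi_lt_four])
  nlinarith [sqrt_nonneg 2]

lemma two_mul_le_phiBound_sin_two_mul : 2 * s ≤ phiBound (sin (2 * s)) := by
  have hlam := mul_add_mul_cos_le_mul_sin (A := π * (2 - √2)) (B := √2 * (4 - π))
    (C := 2 * (π - 2 * √2)) (by linarith [pi_pos]) (by linarith [two_mul_sqrt_two_lt_pi])
    (by nlinarith [mul_pos (sub_pos.2 pi_gt_d6) (sub_pos.2 sqrt_two_gt_d7), pi_gt_d6,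
      sqrt_two_lt_d7])
    (le_of_eq (by ring)) (le_of_eq (by rw [cos_pi_div_four, sin_pi_div_four]; ring)) hs
  rw [phiBound_sin_two_mul hs, le_div_iff₀ (phiBound_denom_pos hs)]
  linarith

lemma phiBound_sin_two_mul_le :
    phiBound (sin (2 * s)) ≤ π * (√2 + 1 / 2) * sin s / (2 + cos s) := by
  have hc := sqrt_two_div_two_le_cos hs
  have hcoef : 0 ≤ 2 * (π - 2 * √2) * (√2 + 1 / 2) - 2 * (2 - √2) := by
    nlinarith [mul_pos (sub_pos.2 pi_gt_d6) (sub_pos.2 sqrt_two_gt_d7), pi_gt_d6,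
      sqrt_two_gt_d7, sq_sqrt (zero_le_two : (0 : ℝ) ≤ 2)]
  have hG : 2 * (2 - √2) * (2 + cos s) ≤
      (√2 + 1 / 2) * (√2 * (4 - π) + 2 * (π - 2 * √2) * cos s) := by
    have := mul_nonneg hcoef (sub_nonneg.2 hc)
    linear_combination this + (2 * √2 - 4) * sq_sqrt (zero_le_two : (0 : ℝ) ≤ 2)
  have := mul_le_mul_of_nonneg_left hG
    (mul_nonneg pi_pos.le (sin_nonneg_of_mem_Icc_pi_div_four hs))
  rw [phiBound_sin_two_mul hs,
    div_le_div_iff₀ (phiBound_denom_pos hs) (by linarith [neg_one_le_cos s])]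
  linarith

lemma pi_mul_sin_div_le_pi_mul_sin_two_mul_div :
    π * (√2 + 1 / 2) * sin s / (2 + cos s) ≤ π * sin (2 * s) / (2 + cos (2 * s)) := by
  have hc := sqrt_two_div_two_le_cos hs
  have hG : (√2 + 1 / 2) * (1 + 2 * cos s ^ 2) ≤ 2 * cos s * (2 + cos s) := by
    have h₁ := mul_nonneg (mul_nonneg (by linarith [sqrt_two_gt_d7] : (0 : ℝ) ≤ 2 * √2 - 1)
      (sub_nonneg.2 hc)) (sub_nonneg.2 (cos_le_one s))
    have h₂ := mul_nonneg (by linarith [sqrt_two_lt_d7] : (0 : ℝ) ≤ 2 - √2) (sub_nonneg.2 hc)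
    linear_combination h₁ + 3 / 2 * h₂ + (cos s - 1 / 4) * sq_sqrt (zero_le_two : (0 : ℝ) ≤ 2)
  have := mul_le_mul_of_nonneg_left hG
    (mul_nonneg pi_pos.le (sin_nonneg_of_mem_Icc_pi_div_four hs))
  rw [sin_two_mul, cos_two_mul,
    div_le_div_iff₀ (by linarith [neg_one_le_cos s]) (by nlinarith [sq_nonneg (cos s)])]
  linarith

end QuarterPi

theorem malesevic_chain (x : ℝ) (hx : 0 ≤ x) (hx' : x ≤ 1) :
    3 * x / (2 + Real.sqrt (1 - x ^ 2)) ≤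
      6 * (Real.sqrt (1 + x) - Real.sqrt (1 - x)) /
        (4 + Real.sqrt (1 + x) + Real.sqrt (1 - x)) ∧
    6 * (Real.sqrt (1 + x) - Real.sqrt (1 - x)) /
        (4 + Real.sqrt (1 + x) + Real.sqrt (1 - x)) ≤ Real.arcsin x ∧
    Real.arcsin x ≤ phiBound x ∧
    phiBound x ≤
      Real.pi * (Real.sqrt 2 + 1 / 2) * (Real.sqrt (1 + x) - Real.sqrt (1 - x)) /
        (4 + Real.sqrt (1 + x) + Real.sqrt (1 - x)) ∧
    Real.pi * (Real.sqrt 2 + 1 / 2) * (Real.sqrt (1 + x) - Real.sqrt (1 - x)) /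
        (4 + Real.sqrt (1 + x) + Real.sqrt (1 - x)) ≤
      Real.pi * x / (2 + Real.sqrt (1 - x ^ 2)) := by
  obtain ⟨s, hs, rfl⟩ : ∃ s ∈ Icc 0 (π / 4), x = sin (2 * s) :=
    ⟨arcsin x / 2, ⟨by linarith [arcsin_nonneg.2 hx], by linarith [arcsin_le_pi_div_two x]⟩,
      by rw [mul_div_cancel₀ _ two_ne_zero, sin_arcsin (by linarith) hx']⟩
  rw [arcsin_sin (by linarith [hs.1, pi_pos]) (by linarith [hs.2, pi_pos]),
    ← cos_eq_sqrt_one_sub_sin_sq (by linarith [hs.1, pi_pos]) (by linarith [hs.2, pi_pos])]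
  simp only [mul_sqrt_sub_sqrt_div_eq hs]
  exact ⟨three_mul_sin_two_mul_div_le (sin_nonneg_of_mem_Icc_pi_div_four hs),
    by rw [div_le_iff₀ (by linarith [neg_one_le_cos s])]
       linarith [three_mul_sin_le_mul_two_add_cos hs.1],
    two_mul_le_phiBound_sin_two_mul hs, phiBound_sin_two_mul_le hs,
    pi_mul_sin_div_le_pi_mul_sin_two_mul_div hs⟩
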